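/- Let K be a field, S = K[x_1,…,x_n], and let I ⊆ S be a complete intersection monomial ideal, i.e. I = (v_1,…,v_m) where v_1,…,v_m are monomials forming a regular sequence (equivalently, monomials with pairwise disjoint supports). Then sdepth(I) = sdepth(√I), where √I is the radical of I. -/

import Mathlib

open MvPolynomial

/-- The Stanley space `u K[Z]`: the `K`-span of all monomials `x^(u+τ)` with
`supp τ ⊆ Z`. -/
noncomputable def StanleySpace (K : Type*) [Field K] {n : ℕ} (u : Fin n →₀ ℕ) (Z : Finset (Fin n)) :
    Submodule K (MvPolynomial (Fin n) K) :=
  Submodule.span K {p | ∃ τ : Fin n →₀ ℕ, (τ.support : Set (Fin n)) ⊆ Z ∧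
    p = monomial (u + τ) (1 : K)}

/-- A Stanley decomposition of a monomial ideal `I`: a finite family of Stanley spaces
`u_i K[Z_i]` with `u_i` a monomial of `I`, whose internal direct sum is `I`
(as a `K`-vector space). -/
structure StanleyDecomposition (K : Type*) [Field K] {n : ℕ}
    (I : Ideal (MvPolynomial (Fin n) K)) where
  r : ℕ
  rpos : 0 < r
  u : Fin r → (Fin n →₀ ℕ)
  Z : Fin r → Finset (Fin n)
  mem : ∀ i, monomial (u i) (1 : K) ∈ I
  isSup : Submodule.restrictScalars K I = ⨆ i, StanleySpace K (u i) (Z i)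
  indep : iSupIndep fun i => StanleySpace K (u i) (Z i)

/-- `sdepth 𝒟 = min_i |Z_i|`. -/
def StanleyDecomposition.sdepth {K : Type*} [Field K] {n : ℕ}
    {I : Ideal (MvPolynomial (Fin n) K)} (D : StanleyDecomposition K I) : ℕ :=
  Finset.univ.inf' ⟨⟨0, D.rpos⟩, Finset.mem_univ _⟩ fun i => (D.Z i).card

/-- The Stanley depth of a monomial ideal: the maximum of `sdepth 𝒟` over all
Stanley decompositions `𝒟` of `I`. -/
noncomputable def Ideal.sdepth (K : Type*) [Field K] {n : ℕ}
    (I : Ideal (MvPolynomial (Fin n) K)) : ℕ :=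
  sSup (Set.range fun D : StanleyDecomposition K I => D.sdepth)

/-!
A Stanley decomposition of a monomial ideal is the same thing as a partition of its exponent set
into finitely many boxes `u + ℕ^Z`, so `sdepth` only depends on which such partitions the exponent
set admits. Since the generators `v i` have disjoint supports, the exponent of `x_j` in any
generator involving it is a fixed number `a_j`. The coordinatewise step map
`x ↦ (if a_j ≤ x_j then 1 else 0)_j` pulls the exponent set of `√I` back to that of `I`, and
`x ↦ (if 1 ≤ x_j then a_j else 0)_j` pulls the exponent set of `I` back to that of `√I`. Under a
coordinatewise step map the preimage of a box with free set `Z` is a product of finite disjoint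
unions of rays and points, all rays on `Z`, hence a finite disjoint union of boxes with at least
`|Z|` free coordinates. So box partitions, and with them `sdepth`, transfer in both directions.
-/

open Set Function

section Boxes

variable {σ : Type*}

def ray (c : ℕ) (free : Prop) : Set ℕ := {t | c ≤ t ∧ (¬free → t = c)}

def stanleyBox (u : σ →₀ ℕ) (Z : Finset σ) : Set (σ →₀ ℕ) := {x | ∀ j, x j ∈ ray (u j) (j ∈ Z)}

lemma self_mem_stanleyBox (u : σ →₀ ℕ) (Z : Finset σ) : u ∈ stanleyBox u Z :=
  fun _ => ⟨le_rfl, fun _ => rfl⟩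

lemma mem_stanleyBox_iff_exists_add {u x : σ →₀ ℕ} {Z : Finset σ} :
    x ∈ stanleyBox u Z ↔ ∃ τ : σ →₀ ℕ, (τ.support : Set σ) ⊆ Z ∧ x = u + τ := by
  constructor
  · intro hx
    refine ⟨x - u, fun j hj => ?_, ?_⟩
    · by_contra hjZ
      simp [(hx j).2 hjZ] at hj
    · ext j
      simp [Nat.add_sub_cancel' (hx j).1]
  · rintro ⟨τ, hτ, rfl⟩ j
    refine ⟨by simp, fun hj => ?_⟩
    simpa using Finsupp.notMem_support_iff.mp fun h => hj (hτ h)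

/-- A Stanley decomposition of Stanley depth at least `d`, seen on exponent vectors. -/
def HasBoxPartition (X : Set (σ →₀ ℕ)) (d : ℕ) : Prop :=
  ∃ F : Finset ((σ →₀ ℕ) × Finset σ),
    (F : Set ((σ →₀ ℕ) × Finset σ)).PairwiseDisjoint (fun p => stanleyBox p.1 p.2) ∧
    ⋃ p ∈ F, stanleyBox p.1 p.2 = X ∧ ∀ p ∈ F, d ≤ p.2.card

namespace HasBoxPartition

variable {X : Set (σ →₀ ℕ)} {d : ℕ}

lemma mono {d' : ℕ} (h : HasBoxPartition X d) (hd : d' ≤ d) : HasBoxPartition X d' :=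
  let ⟨F, hdisj, hcover, hcard⟩ := h
  ⟨F, hdisj, hcover, fun p hp => hd.trans (hcard p hp)⟩

lemma biUnion {κ : Type*} (s : Finset κ) {X : κ → Set (σ →₀ ℕ)}
    (hX : (s : Set κ).PairwiseDisjoint X) (h : ∀ k ∈ s, HasBoxPartition (X k) d) :
    HasBoxPartition (⋃ k ∈ s, X k) d := by
  classical
  choose! F hdisj hcover hcard using h
  have hsup : ∀ k ∈ s, (F k).sup (fun p => stanleyBox p.1 p.2) = X k := fun k hk => by
    rw [Finset.sup_set_eq_biUnion, hcover k hk]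
  refine ⟨s.biUnion F, ?_, ?_, ?_⟩
  · rw [Finset.coe_biUnion]
    exact Set.PairwiseDisjoint.biUnion_finset
      (fun k hk l hl hkl => by
        simpa only [onFun, hsup k hk, hsup l hl] using hX hk hl hkl) hdisj
  · rw [Finset.set_biUnion_biUnion]
    exact iUnion₂_congr hcover
  · intro p hp
    obtain ⟨k, hk, hpk⟩ := Finset.mem_biUnion.mp hp
    exact hcard k hk p hpk

lemma preimage {σ' : Type*} {f : (σ →₀ ℕ) → (σ' →₀ ℕ)} {Y : Set (σ' →₀ ℕ)}
    (hY : HasBoxPartition Y d) (hf : ∀ u Z, HasBoxPartition (f ⁻¹' stanleyBox u Z) Z.card) :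
    HasBoxPartition (f ⁻¹' Y) d := by
  obtain ⟨F, hdisj, rfl, hcard⟩ := hY
  rw [preimage_iUnion₂]
  exact biUnion F (fun p hp q hq hpq => (hdisj hp hq hpq).preimage f)
    fun p hp => (hf p.1 p.2).mono (hcard p hp)

end HasBoxPartition

lemma hasBoxPartition_pi [Fintype σ] [DecidableEq σ] (P : σ → Finset (ℕ × Bool))
    (hP : ∀ j, (P j : Set (ℕ × Bool)).PairwiseDisjoint fun p => ray p.1 p.2)
    (Z : Finset σ) (hZ : ∀ j ∈ Z, ∀ p ∈ P j, p.2) :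
    HasBoxPartition {x | ∀ j, ∃ p ∈ P j, x j ∈ ray p.1 p.2} Z.card := by
  set box : (σ → ℕ × Bool) → (σ →₀ ℕ) × Finset σ := fun f =>
    (Finsupp.equivFunOnFinite.symm fun j => (f j).1, Finset.univ.filter fun j => (f j).2)
  have mem_box : ∀ f x, x ∈ stanleyBox (box f).1 (box f).2 ↔ ∀ j, x j ∈ ray (f j).1 (f j).2 :=
    fun f x => by simp [box, stanleyBox]
  refine ⟨(Fintype.piFinset P).image box, ?_, ?_, ?_⟩
  · simp only [Finset.coe_image]
    rintro _ ⟨f, hf, rfl⟩ _ ⟨g, hg, rfl⟩ hfg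
    obtain ⟨j, hj⟩ : ∃ j, f j ≠ g j := ne_iff.mp fun h => hfg (by rw [h])
    refine Set.disjoint_left.mpr fun x hx hx' => ?_
    rw [mem_box] at hx hx'
    rw [Finset.mem_coe, Fintype.mem_piFinset] at hf hg
    exact Set.disjoint_left.mp (hP j (hf j) (hg j) hj) (hx j) (hx' j)
  · ext x
    simp only [Finset.mem_image, Fintype.mem_piFinset, mem_iUnion, exists_prop, mem_ofPred_eq]
    constructor
    · rintro ⟨_, ⟨f, hf, rfl⟩, hx⟩ j
      exact ⟨f j, hf j, (mem_box f x).mp hx j⟩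
    · intro hx
      choose f hf hxf using hx
      exact ⟨box f, ⟨f, hf, rfl⟩, (mem_box f x).mpr hxf⟩
  · simp only [Finset.mem_image, Fintype.mem_piFinset]
    rintro _ ⟨f, hf, rfl⟩
    exact Finset.card_le_card fun j hj => by simpa [box] using hZ j hj (f j) (hf j)

end Boxes

section StepMap

def step (θ α t : ℕ) : ℕ := if θ ≤ t then α else 0

/-- The hypothesis `0 ∈ Y → α ∈ Y` holds for every ray `Y = [c, ∞)`; it excludes the preimage
`[0, θ)`, the only one that has to be cut into points. -/
lemma exists_pieces_step_preimage (θ α : ℕ) (Y : Set ℕ) :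
    ∃ P : Finset (ℕ × Bool), (P : Set (ℕ × Bool)).PairwiseDisjoint (fun p => ray p.1 p.2) ∧
      (∀ t, step θ α t ∈ Y ↔ ∃ p ∈ P, t ∈ ray p.1 p.2) ∧ ((0 ∈ Y → α ∈ Y) → ∀ p ∈ P, p.2) := by
  by_cases hα : α ∈ Y <;> by_cases h0 : 0 ∈ Y
  · refine ⟨{(0, true)}, by simp, fun t => ?_, by simp⟩
    simp only [step, Finset.mem_singleton, exists_eq_left, ray]
    split_ifs <;> simp_all
  · refine ⟨{(θ, true)}, by simp, fun t => ?_, by simp⟩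
    simp only [step, Finset.mem_singleton, exists_eq_left, ray]
    split_ifs <;> simp_all
  · refine ⟨(Finset.range θ).image fun c => (c, false), ?_, fun t => ?_, by simp_all⟩
    · simp only [Finset.coe_image]
      rintro _ ⟨c, -, rfl⟩ _ ⟨c', -, rfl⟩ hcc'
      refine Set.disjoint_left.mpr fun t ht ht' => hcc' ?_
      simp_all [ray]
    · simp only [step, Finset.mem_image, Finset.mem_range, ray]
      split_ifs <;> simp_all
  · refine ⟨∅, by simp, fun t => ?_, by simp⟩
    simp only [step]
    split_ifs <;> simp_all

variable {σ : Type*} [Fintype σ]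

noncomputable def stepMap (θ α : σ → ℕ) (x : σ →₀ ℕ) : σ →₀ ℕ :=
  Finsupp.equivFunOnFinite.symm fun j => step (θ j) (α j) (x j)

@[simp]
lemma stepMap_apply (θ α : σ → ℕ) (x : σ →₀ ℕ) (j : σ) :
    stepMap θ α x j = step (θ j) (α j) (x j) := rfl

lemma hasBoxPartition_preimage_stepMap (θ α : σ → ℕ) (u : σ →₀ ℕ) (Z : Finset σ) :
    HasBoxPartition (stepMap θ α ⁻¹' stanleyBox u Z) Z.card := by
  classical
  choose P hdisj hpre hfree using
    fun j => exists_pieces_step_preimage (θ j) (α j) (ray (u j) (j ∈ Z))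
  have : stepMap θ α ⁻¹' stanleyBox u Z = {x | ∀ j, ∃ p ∈ P j, x j ∈ ray p.1 p.2} := by
    ext x
    simp [stanleyBox, hpre]
  rw [this]
  exact hasBoxPartition_pi P hdisj Z fun j hj =>
    hfree j fun h0 => ⟨h0.1.trans (Nat.zero_le _), fun h => absurd hj h⟩

end StepMap

section SquarefreePart

variable {σ : Type*}

noncomputable def squarefreePart (w : σ →₀ ℕ) : σ →₀ ℕ := w.mapRange (fun t => min t 1) rfl

@[simp]
lemma squarefreePart_apply (w : σ →₀ ℕ) (j : σ) : squarefreePart w j = min (w j) 1 := rfl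

lemma squarefreePart_le_of_le_nsmul {w e : σ →₀ ℕ} {k : ℕ} (h : w ≤ k • e) :
    squarefreePart w ≤ e := fun j => by
  have := h j
  simp only [Finsupp.smul_apply, smul_eq_mul] at this
  rcases Nat.eq_zero_or_pos (e j) with he | he
  · simp_all
  · exact (min_le_right _ _).trans he

lemma exists_le_nsmul_squarefreePart (w : σ →₀ ℕ) : ∃ k : ℕ, w ≤ k • squarefreePart w :=
  ⟨w.support.sup w, fun j => by
    rcases Nat.eq_zero_or_pos (w j) with hw | hw
    · simp [hw]
    · simpa [Nat.one_le_iff_ne_zero.mpr hw.ne'] using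
        Finset.le_sup (f := w) (Finsupp.mem_support_iff.mpr hw.ne')⟩

variable [Fintype σ] {w : σ →₀ ℕ} {a : σ → ℕ} (x : σ →₀ ℕ)

lemma squarefreePart_le_stepMap_iff (hw : ∀ j ∈ w.support, w j = a j) :
    squarefreePart w ≤ stepMap a 1 x ↔ w ≤ x := by
  refine forall_congr' fun j => ?_
  by_cases hj : j ∈ w.support
  · have := Finsupp.mem_support_iff.mp hj
    simp only [squarefreePart_apply, stepMap_apply, step, Pi.one_apply, ← hw j hj]
    split_ifs <;> omega
  · simp [Finsupp.notMem_support_iff.mp hj]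

lemma le_stepMap_iff_squarefreePart_le (hw : ∀ j ∈ w.support, w j = a j) :
    w ≤ stepMap 1 a x ↔ squarefreePart w ≤ x := by
  refine forall_congr' fun j => ?_
  by_cases hj : j ∈ w.support
  · have := Finsupp.mem_support_iff.mp hj
    simp only [squarefreePart_apply, stepMap_apply, step, Pi.one_apply, ← hw j hj]
    split_ifs <;> omega
  · simp [Finsupp.notMem_support_iff.mp hj]

end SquarefreePart

theorem hasBoxPartition_upperClosure_squarefreePart_iff {σ ι : Type*} [Fintype σ]
    (w : ι → σ →₀ ℕ) (a : σ → ℕ) (hw : ∀ i, ∀ j ∈ (w i).support, w i j = a j) {d : ℕ} :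
    HasBoxPartition (upperClosure (range fun i => squarefreePart (w i)) : Set (σ →₀ ℕ)) d ↔
      HasBoxPartition (upperClosure (range w) : Set (σ →₀ ℕ)) d := by
  have hw_pullback : (upperClosure (range w) : Set (σ →₀ ℕ)) =
      stepMap a 1 ⁻¹' upperClosure (range fun i => squarefreePart (w i)) := by
    ext x
    simp [squarefreePart_le_stepMap_iff x (hw _)]
  have hsqf_pullback : (upperClosure (range fun i => squarefreePart (w i)) : Set (σ →₀ ℕ)) =
      stepMap 1 a ⁻¹' upperClosure (range w) := by
    ext x
    simp [le_stepMap_iff_squarefreePart_le x (hw _)]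
  constructor
  · intro h
    rw [hw_pullback]
    exact h.preimage (hasBoxPartition_preimage_stepMap a 1)
  · intro h
    rw [hsqf_pullback]
    exact h.preimage (hasBoxPartition_preimage_stepMap 1 a)

section MonomialIdeal

variable {σ R ι : Type*} [CommSemiring R]

lemma mem_span_range_monomial_iff (w : ι → σ →₀ ℕ) {p : MvPolynomial σ R} :
    p ∈ Ideal.span (range fun i => monomial (w i) (1 : R)) ↔ ∀ e ∈ p.support, ∃ i, w i ≤ e := by
  rw [show (range fun i => monomial (w i) (1 : R)) = (monomial · 1) '' range w from
    range_comp (fun e => monomial e (1 : R)) w, mem_ideal_span_monomial_image]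
  simp

lemma monomial_mem_span_range_monomial {w : ι → σ →₀ ℕ} {e : σ →₀ ℕ} (i : ι) (h : w i ≤ e)
    (c : R) : monomial e c ∈ Ideal.span (range fun i => monomial (w i) (1 : R)) :=
  (mem_span_range_monomial_iff w).mpr fun _ he =>
    ⟨i, Finset.mem_singleton.mp (support_monomial_subset he) ▸ h⟩

lemma restrictScalars_span_range_monomial (w : ι → σ →₀ ℕ) :
    (Ideal.span (range fun i => monomial (w i) (1 : R))).restrictScalars R =
      restrictSupport R (upperClosure (range w)) := by
  ext p
  simp [mem_span_range_monomial_iff, mem_restrictSupport_iff, Set.subset_def]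

end MonomialIdeal

section Radical

variable {σ R ι : Type*} [CommRing R] [IsReduced R] [LinearOrder σ] [WellFoundedGT σ]

open MonomialOrder

lemma leadingTerm_mem_span_squarefreePart {w : ι → σ →₀ ℕ} {p : MvPolynomial σ R} {k : ℕ}
    (hp : p ^ k ∈ Ideal.span (range fun i => monomial (w i) (1 : R))) :
    lex.leadingTerm p ∈ Ideal.span (range fun i => monomial (squarefreePart (w i)) (1 : R)) := by
  rcases eq_or_ne p 0 with rfl | hp0
  · simp
  have hpk : p ^ k ≠ 0 := fun h => hp0 (IsNilpotent.eq_zero ⟨k, h⟩)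
  obtain ⟨i, hi⟩ := (mem_span_range_monomial_iff w).mp hp _ (lex.degree_mem_support hpk)
  rw [lex.degree_pow] at hi
  exact monomial_mem_span_range_monomial i (squarefreePart_le_of_le_nsmul hi) _

theorem radical_span_range_monomial (w : ι → σ →₀ ℕ) :
    (Ideal.span (range fun i => monomial (w i) (1 : R))).radical =
      Ideal.span (range fun i => monomial (squarefreePart (w i)) (1 : R)) := by
  set I := Ideal.span (range fun i => monomial (w i) (1 : R))
  set J := Ideal.span (range fun i => monomial (squarefreePart (w i)) (1 : R))
  have hJ : J ≤ I.radical := by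
    rw [Ideal.span_le]
    rintro _ ⟨i, rfl⟩
    obtain ⟨k, hk⟩ := exists_le_nsmul_squarefreePart (w i)
    exact ⟨k, by simpa only [monomial_pow, one_pow] using monomial_mem_span_range_monomial i hk 1⟩
  refine le_antisymm (fun p hp => ?_) hJ
  induction hN : p.support.card using Nat.strong_induction_on generalizing p with
  | _ N ih =>
  rcases eq_or_ne p 0 with rfl | hp0
  · exact J.zero_mem
  obtain ⟨k, hk⟩ := hp
  have hlt : lex.leadingTerm p ∈ J := leadingTerm_mem_span_squarefreePart hk
  have hsupp : (p - lex.leadingTerm p).support ⊂ p.support := by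
    refine (Finset.ssubset_iff_of_subset fun e he => ?_).mpr
      ⟨lex.degree p, lex.degree_mem_support hp0, ?_⟩
    · rcases Finset.mem_union.mp (support_sub σ p _ he) with he | he
      · exact he
      · exact Finset.mem_singleton.mp (support_monomial_subset he) ▸ lex.degree_mem_support hp0
    · simp [leadingTerm, leadingCoeff]
  have := ih _ (hN ▸ Finset.card_lt_card hsupp) _ (I.radical.sub_mem ⟨k, hk⟩ (hJ hlt)) rfl
  simpa using J.add_mem this hlt

end Radical

section RestrictSupport

variable {σ R : Type*} [CommSemiring R]

lemma restrictSupport_iUnion {ι : Type*} (s : ι → Set (σ →₀ ℕ)) :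
    restrictSupport R (⋃ i, s i) = ⨆ i, restrictSupport R (s i) := by
  simp_rw [restrictSupport_eq_span, image_iUnion, Submodule.span_iUnion]

lemma disjoint_restrictSupport {s t : Set (σ →₀ ℕ)} (h : Disjoint s t) :
    Disjoint (restrictSupport R s) (restrictSupport R t) :=
  Submodule.disjoint_def.mpr fun p hs ht => by
    rw [← support_eq_empty, ← Finset.coe_eq_empty, ← subset_empty_iff, ← h.inter_eq]
    exact subset_inter hs ht

lemma disjoint_restrictSupport_iff [Nontrivial R] {s t : Set (σ →₀ ℕ)} :
    Disjoint (restrictSupport R s) (restrictSupport R t) ↔ Disjoint s t := by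
  refine ⟨fun h => Set.disjoint_left.mpr fun e hs ht => ?_, disjoint_restrictSupport⟩
  have := Submodule.disjoint_def.mp h (monomial e (1 : R)) (by simp [hs]) (by simp [ht])
  exact one_ne_zero (monomial_eq_zero.mp this)

lemma iSupIndep_restrictSupport {ι : Type*} {s : ι → Set (σ →₀ ℕ)}
    (h : Pairwise (Disjoint on s)) : iSupIndep fun i => restrictSupport R (s i) := by
  refine iSupIndep_def.mpr fun i => ?_
  have hle : ⨆ (j) (_ : j ≠ i), restrictSupport R (s j) ≤
      restrictSupport R (⋃ (j) (_ : j ≠ i), s j) :=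
    iSup₂_le fun j hj =>
      restrictSupport_mono R (subset_iUnion₂ (s := fun j (_ : j ≠ i) => s j) j hj)
  have hdisj : Disjoint (s i) (⋃ (j) (_ : j ≠ i), s j) :=
    disjoint_iUnion₂_right.mpr fun _ hj => h (Ne.symm hj)
  exact (disjoint_restrictSupport hdisj).mono_right hle

lemma restrictSupport_injective [Nontrivial R] :
    Injective (restrictSupport R : Set (σ →₀ ℕ) → Submodule R (MvPolynomial σ R)) :=
  fun s t h => by
    ext e
    simpa using SetLike.ext_iff.mp h (monomial e 1)

end RestrictSupport

section StanleyDecomposition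

variable {K : Type*} [Field K] {n : ℕ}

lemma stanleySpace_eq_restrictSupport (u : Fin n →₀ ℕ) (Z : Finset (Fin n)) :
    StanleySpace K u Z = restrictSupport K (stanleyBox u Z) := by
  rw [StanleySpace, restrictSupport_eq_span]
  congr 1
  ext p
  simp [mem_stanleyBox_iff_exists_add, eq_comm]

lemma iSup_stanleySpace {r : ℕ} (u : Fin r → Fin n →₀ ℕ) (Z : Fin r → Finset (Fin n)) :
    ⨆ i, StanleySpace K (u i) (Z i) = restrictSupport K (⋃ i, stanleyBox (u i) (Z i)) := by
  simp_rw [stanleySpace_eq_restrictSupport]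
  exact (restrictSupport_iUnion _).symm

variable {I : Ideal (MvPolynomial (Fin n) K)} {A : Set (Fin n →₀ ℕ)}

lemma StanleyDecomposition.hasBoxPartition (hI : I.restrictScalars K = restrictSupport K A)
    (D : StanleyDecomposition K I) : HasBoxPartition A D.sdepth := by
  classical
  refine ⟨Finset.univ.image fun i => (D.u i, D.Z i), ?_, ?_, ?_⟩
  · simp only [Finset.coe_image, Finset.coe_univ, image_univ]
    rintro _ ⟨i, rfl⟩ _ ⟨j, rfl⟩ hij
    have := D.indep.pairwiseDisjoint (fun h => hij (h ▸ rfl) : i ≠ j)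
    rw [onFun, stanleySpace_eq_restrictSupport, stanleySpace_eq_restrictSupport] at this
    exact disjoint_restrictSupport_iff.mp this
  · apply restrictSupport_injective (R := K)
    rw [← hI, D.isSup, iSup_stanleySpace]
    simp
  · simp only [Finset.mem_image, Finset.mem_univ, true_and]
    rintro _ ⟨i, rfl⟩
    exact Finset.inf'_le _ (Finset.mem_univ i)

lemma exists_stanleyDecomposition_le_sdepth (hI : I.restrictScalars K = restrictSupport K A)
    (hA : A.Nonempty) {d : ℕ} (h : HasBoxPartition A d) :
    ∃ D : StanleyDecomposition K I, d ≤ D.sdepth := by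
  obtain ⟨F, hdisj, hcover, hcard⟩ := h
  have hF : 0 < F.card := by
    obtain ⟨x, hx⟩ := hA
    obtain ⟨p, hp, -⟩ := mem_iUnion₂.mp (hcover ▸ hx)
    exact Finset.card_pos.mpr ⟨p, hp⟩
  let e := F.equivFin.symm
  have hunion : ⋃ i, stanleyBox (e i).1.1 (e i).1.2 = A := by
    rw [← hcover, e.surjective.iUnion_comp fun p => stanleyBox p.1.1 p.1.2]
    exact iUnion_subtype (· ∈ F) fun p => stanleyBox p.1.1 p.1.2
  refine ⟨⟨F.card, hF, fun i => (e i).1.1, fun i => (e i).1.2, fun i => ?_, ?_, ?_⟩, ?_⟩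
  · rw [← Submodule.restrictScalars_mem K, hI, monomial_mem_restrictSupport]
    exact Or.inl (hunion ▸ mem_iUnion.mpr ⟨i, self_mem_stanleyBox _ _⟩)
  · rw [iSup_stanleySpace, hunion, hI]
  · simp_rw [stanleySpace_eq_restrictSupport]
    exact iSupIndep_restrictSupport fun i j hij =>
      hdisj (e i).2 (e j).2 fun h => hij (e.injective (Subtype.ext h))
  · exact Finset.le_inf' _ _ fun i _ => hcard _ (e i).2

lemma Ideal.sdepth_eq_sSup_hasBoxPartition (hI : I.restrictScalars K = restrictSupport K A)
    (hA : A.Nonempty) : Ideal.sdepth K I = sSup {d | HasBoxPartition A d} := by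
  refine csSup_eq_csSup_of_forall_exists_le ?_ fun d hd => ?_
  · rintro _ ⟨D, rfl⟩
    exact ⟨_, D.hasBoxPartition hI, le_rfl⟩
  · obtain ⟨D, hD⟩ := exists_stanleyDecomposition_le_sdepth hI hA hd
    exact ⟨_, ⟨D, rfl⟩, hD⟩

end StanleyDecomposition

lemma Finsupp.sum_apply_of_mem_support {σ ι : Type*} [Fintype ι] {v : ι → σ →₀ ℕ}
    (hdisj : Pairwise (Disjoint on fun i => (v i).support)) {i : ι} {j : σ}
    (hj : j ∈ (v i).support) : (∑ k, v k) j = v i j := by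
  rw [Finsupp.finsetSum_apply, Finset.sum_eq_single i (fun k _ hki => ?_) (by simp)]
  exact Finsupp.notMem_support_iff.mp (Finset.disjoint_left.mp (hdisj hki.symm) hj)

theorem sdepth_ci_radical_general (n : ℕ) (K : Type*) [Field K]
    (m : ℕ) (v : Fin m → (Fin n →₀ ℕ))
    (hdisj : ∀ i j, i ≠ j → Disjoint (v i).support (v j).support) :
    Ideal.sdepth K (Ideal.span (Set.range fun i => monomial (v i) (1 : K))) =
    Ideal.sdepth K
      (Ideal.span (Set.range fun i => monomial (v i) (1 : K))).radical := by
  rw [radical_span_range_monomial]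
  rcases isEmpty_or_nonempty (Fin m) with _ | ⟨⟨i⟩⟩
  · simp [range_eq_empty]
  have hA : ∀ w : Fin m → Fin n →₀ ℕ, (upperClosure (range w) : Set (Fin n →₀ ℕ)).Nonempty :=
    fun w => ⟨w i, subset_upperClosure (mem_range_self i)⟩
  rw [Ideal.sdepth_eq_sSup_hasBoxPartition (restrictScalars_span_range_monomial v) (hA _),
    Ideal.sdepth_eq_sSup_hasBoxPartition (restrictScalars_span_range_monomial _) (hA _)]
  congr 1
  ext d
  exact (hasBoxPartition_upperClosure_squarefreePart_iff v ⇑(∑ k, v k)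
    fun i j hj => (Finsupp.sum_apply_of_mem_support hdisj hj).symm).symm

/-- If `I = (v₁, …, vₘ)` is a complete intersection monomial ideal (the monomial
generators are nonconstant with pairwise disjoint supports, i.e. they form a regular
sequence), then `sdepth I = sdepth √I`. -/
theorem sdepth_ci_radical (n : ℕ) (K : Type*) [Field K]
    (m : ℕ) (v : Fin m → (Fin n →₀ ℕ)) (hv : ∀ i, v i ≠ 0)
    (hdisj : ∀ i j, i ≠ j → Disjoint (v i).support (v j).support) :
    Ideal.sdepth K (Ideal.span (Set.range fun i => monomial (v i) (1 : K))) =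
    Ideal.sdepth K
      (Ideal.span (Set.range fun i => monomial (v i) (1 : K))).radical :=
  sdepth_ci_radical_general n K m v hdisj
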